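/- Let φ : ℝ → [0,1] be continuous, supported in [−1/2,1/2], with φ = 1 on [−1/4,1/4]. Fix an interval I, an affine homeomorphism A : I → [−1/2,1/2], an irrational α, and an integer n ≥ 1, and define φ^ω : ℝ/ℤ → ℝ supported on ∪_{k=1}^{2n−1}(I + kα) by φ^ω(x + kα) = (n − |n − k|)·φ(A(x)) for x ∈ I and 1 ≤ k ≤ 2n−1, assuming the translates I + kα, 0 ≤ k ≤ 2n, are pairwise disjoint. Then sup_{x} |φ^ω(x + α) − φ^ω(x)| ≤ 1, and φ^ω(x + nα) = φ(A(x)) · n for x ∈ I, so sup φ^ω = n. -/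

import Mathlib

/-!
Write `w k = n - |n - k|`, so that `φ^ω (x + kα) = w k · φ (A x)` for `x ∈ I` and `1 ≤ k ≤ 2n - 1`.
Since `w 0 = w (2n) = 0` and the translates `I + kα`, `0 ≤ k ≤ 2n`, are disjoint, the same formula
holds for `k = 0` and `k = 2n`, where both sides vanish. A point `z` either lies in no translate
`I + kα` with `k ≤ 2n - 1`, and then `φ^ω` vanishes at `z` and at `z + α`, or `z = x + kα` with
`k ≤ 2n - 1`, and then `φ^ω (z + α) - φ^ω z = (w (k + 1) - w k) · φ (A x)` has absolute value at
most `1`, because consecutive weights differ by at most `1` and `0 ≤ φ ≤ 1`.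
-/

open Finset

def tentWeight (n k : ℕ) : ℝ := n - |(n : ℝ) - k|

lemma tentWeight_zero (n : ℕ) : tentWeight n 0 = 0 := by
  simp [tentWeight]

lemma tentWeight_two_mul (n : ℕ) : tentWeight n (2 * n) = 0 := by
  simp only [tentWeight, Nat.cast_mul, Nat.cast_ofNat]
  rw [show (n : ℝ) - 2 * n = -n by ring, abs_neg, Nat.abs_cast, sub_self]

lemma tentWeight_self (n : ℕ) : tentWeight n n = n := by
  simp [tentWeight]

lemma tentWeight_le (n k : ℕ) : tentWeight n k ≤ n :=
  sub_le_self _ (abs_nonneg _)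

lemma tentWeight_nonneg {n k : ℕ} (hk : k ≤ 2 * n) : 0 ≤ tentWeight n k := by
  have hk' : (k : ℝ) ≤ 2 * n := by exact_mod_cast hk
  rw [tentWeight, sub_nonneg, abs_le]
  constructor <;> linarith [(k.cast_nonneg : (0 : ℝ) ≤ k)]

lemma abs_tentWeight_succ_sub_le_one (n k : ℕ) : |tentWeight n (k + 1) - tentWeight n k| ≤ 1 := by
  have h := abs_abs_sub_abs_le_abs_sub ((n : ℝ) - k) ((n : ℝ) - (k + 1))
  rw [show (n : ℝ) - k - (n - (k + 1)) = 1 by ring, abs_one] at h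
  rwa [tentWeight, tentWeight, Nat.cast_succ, sub_sub_sub_cancel_left]

lemma apply_add_nsmul_eq_mul {G : Type*} [AddMonoid G] {I : Set G} {a : G} {N : ℕ}
    {w : ℕ → ℝ} {g F : G → ℝ}
    (hval : ∀ x ∈ I, ∀ k ∈ Icc 1 N, F (x + k • a) = w k * g x)
    (hzero : ∀ z, z ∉ ⋃ k ∈ Icc 1 N, (fun x => x + k • a) '' I → F z = 0)
    (hdisj : ∀ k ∈ Icc 0 (N + 1), ∀ k' ∈ Icc 0 (N + 1), k ≠ k' →
      Disjoint ((fun z => z + k • a) '' I) ((fun z => z + k' • a) '' I))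
    (hw₀ : w 0 = 0) (hw : w (N + 1) = 0) {x : G} (hx : x ∈ I) {k : ℕ} (hk : k ≤ N + 1) :
    F (x + k • a) = w k * g x := by
  by_cases hkN : k ∈ Icc 1 N
  · exact hval x hx k hkN
  have hk_end : k = 0 ∨ k = N + 1 := by rw [mem_Icc] at hkN; omega
  have hnot : x + k • a ∉ ⋃ k ∈ Icc 1 N, (fun x => x + k • a) '' I := by
    simp only [Set.mem_iUnion]
    rintro ⟨k', hk', hmem⟩
    rw [mem_Icc] at hk'
    exact Set.disjoint_left.mp (hdisj k (by simp; omega) k' (by simp; omega) (by omega))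
      ⟨x, hx, rfl⟩ hmem
  rw [hzero _ hnot]
  rcases hk_end with rfl | rfl <;> simp [hw₀, hw]

lemma abs_apply_add_sub_apply_le_one {G : Type*} [AddRightCancelMonoid G] {I : Set G} {a : G}
    {N : ℕ} {w : ℕ → ℝ} {g F : G → ℝ}
    (hval : ∀ x ∈ I, ∀ k ∈ Icc 1 N, F (x + k • a) = w k * g x)
    (hzero : ∀ z, z ∉ ⋃ k ∈ Icc 1 N, (fun x => x + k • a) '' I → F z = 0)
    (hdisj : ∀ k ∈ Icc 0 (N + 1), ∀ k' ∈ Icc 0 (N + 1), k ≠ k' →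
      Disjoint ((fun z => z + k • a) '' I) ((fun z => z + k' • a) '' I))
    (hw₀ : w 0 = 0) (hw : w (N + 1) = 0) (hstep : ∀ k, |w (k + 1) - w k| ≤ 1)
    (hg : ∀ x ∈ I, |g x| ≤ 1) (z : G) :
    |F (z + a) - F z| ≤ 1 := by
  by_cases hz : ∃ x ∈ I, ∃ k ≤ N, z = x + k • a
  · obtain ⟨x, hx, k, hk, rfl⟩ := hz
    have hF := fun k (hk : k ≤ N + 1) => apply_add_nsmul_eq_mul hval hzero hdisj hw₀ hw hx hk
    rw [add_assoc, ← succ_nsmul, hF (k + 1) (by omega), hF k (by omega), ← sub_mul, abs_mul]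
    exact mul_le_one₀ (hstep k) (abs_nonneg _) (hg x hx)
  push Not at hz
  have hFz : F z = 0 := by
    refine hzero z ?_
    simp only [Set.mem_iUnion, Set.mem_image, mem_Icc]
    rintro ⟨k, hk, x, hx, rfl⟩
    exact hz x hx k hk.2 rfl
  have hFza : F (z + a) = 0 := by
    refine hzero _ ?_
    simp only [Set.mem_iUnion, Set.mem_image, mem_Icc]
    rintro ⟨k, hk, x, hx, hxz⟩
    obtain ⟨j, rfl⟩ : ∃ j, k = j + 1 := ⟨k - 1, by omega⟩
    rw [succ_nsmul, ← add_assoc] at hxz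
    exact hz x hx j (by omega) (add_right_cancel hxz).symm
  simp [hFz, hFza]

lemma apply_le_of_forall_weight_le {G : Type*} [AddMonoid G] {I : Set G} {a : G} {N : ℕ}
    {w : ℕ → ℝ} {g F : G → ℝ} {M : ℝ}
    (hval : ∀ x ∈ I, ∀ k ∈ Icc 1 N, F (x + k • a) = w k * g x)
    (hzero : ∀ z, z ∉ ⋃ k ∈ Icc 1 N, (fun x => x + k • a) '' I → F z = 0)
    (hM : 0 ≤ M) (hw : ∀ k ∈ Icc 1 N, 0 ≤ w k ∧ w k ≤ M)
    (hg : ∀ x ∈ I, 0 ≤ g x ∧ g x ≤ 1) (z : G) :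
    F z ≤ M := by
  by_cases hz : z ∈ ⋃ k ∈ Icc 1 N, (fun x => x + k • a) '' I
  · simp only [Set.mem_iUnion, Set.mem_image] at hz
    obtain ⟨k, hk, x, hx, rfl⟩ := hz
    rw [hval x hx k hk]
    exact (mul_le_of_le_one_right (hw k hk).1 (hg x hx).2).trans (hw k hk).2
  · rw [hzero z hz]
    exact hM

theorem stmt13_general (α : ℝ) (n : ℕ) (hn : 1 ≤ n)
    (φ : ℝ → ℝ)
    (hφr : ∀ t, φ t ∈ Set.Icc (0 : ℝ) 1)
    (hφ1 : ∀ t ∈ Set.Icc (-(1 / 4) : ℝ) (1 / 4), φ t = 1)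
    (I : Set UnitAddCircle) (A : UnitAddCircle → ℝ)
    (hA : Set.BijOn A I (Set.Icc (-(1 / 2) : ℝ) (1 / 2)))
    (hdisj : ∀ k ∈ Finset.Icc 0 (2 * n), ∀ k' ∈ Finset.Icc 0 (2 * n), k ≠ k' →
      Disjoint ((fun z => z + k • (α : UnitAddCircle)) '' I)
               ((fun z => z + k' • (α : UnitAddCircle)) '' I))
    (φω : UnitAddCircle → ℝ)
    (hval : ∀ x ∈ I, ∀ k ∈ Finset.Icc 1 (2 * n - 1),
      φω (x + k • (α : UnitAddCircle)) = ((n : ℝ) - |(n : ℝ) - (k : ℝ)|) * φ (A x))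
    (hzero : ∀ z : UnitAddCircle,
      z ∉ ⋃ k ∈ Finset.Icc 1 (2 * n - 1), (fun x => x + k • (α : UnitAddCircle)) '' I →
      φω z = 0) :
    (∀ z : UnitAddCircle, |φω (z + (α : UnitAddCircle)) - φω z| ≤ 1) ∧
    (∀ x ∈ I, φω (x + n • (α : UnitAddCircle)) = (n : ℝ) * φ (A x)) ∧
    (∀ z, φω z ≤ (n : ℝ)) ∧ (∃ z, φω z = (n : ℝ)) := by
  have hN : 2 * n - 1 + 1 = 2 * n := by omega
  have hval' : ∀ x ∈ I, ∀ k ∈ Icc 1 (2 * n - 1),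
      φω (x + k • (α : UnitAddCircle)) = tentWeight n k * φ (A x) := hval
  have hmid : ∀ x ∈ I, φω (x + n • (α : UnitAddCircle)) = n * φ (A x) := fun x hx => by
    rw [hval' x hx n (by simp; omega), tentWeight_self]
  obtain ⟨x₀, hx₀, hAx₀⟩ := hA.surjOn (⟨by norm_num, by norm_num⟩ :
    (0 : ℝ) ∈ Set.Icc (-(1 / 2) : ℝ) (1 / 2))
  refine ⟨?_, hmid, ?_, x₀ + n • (α : UnitAddCircle), ?_⟩
  · rw [← hN] at hdisj
    refine abs_apply_add_sub_apply_le_one hval' hzero hdisj (tentWeight_zero n)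
      (by rw [hN]; exact tentWeight_two_mul n) (abs_tentWeight_succ_sub_le_one n) fun x _ => ?_
    exact abs_le.mpr ⟨by linarith [(hφr (A x)).1], (hφr (A x)).2⟩
  · exact apply_le_of_forall_weight_le hval' hzero n.cast_nonneg
      (fun k hk => ⟨tentWeight_nonneg (by simp at hk; omega), tentWeight_le n k⟩)
      fun x _ => hφr (A x)
  · rw [hmid x₀ hx₀, hAx₀, hφ1 0 (by norm_num), mul_one]

/-- With `φ : ℝ → [0,1]` continuous, supported in `[−1/2,1/2]`, equal to `1` on
`[−1/4,1/4]`, `A : I → [−1/2,1/2]` a bijection, `α` irrational, `n ≥ 1`, and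
`φ^ω` supported on `⋃_{k=1}^{2n−1} (I + kα)` with `φ^ω(x+kα) = (n−|n−k|)·φ(A(x))`,
the translates `I + kα`, `0 ≤ k ≤ 2n`, being pairwise disjoint: then
`sup_z |φ^ω(z+α) − φ^ω(z)| ≤ 1`, `φ^ω(x+nα) = n·φ(A(x))` on `I`, and `sup φ^ω = n`. -/
theorem stmt13 (α : ℝ) (hα : Irrational α) (n : ℕ) (hn : 1 ≤ n)
    (φ : ℝ → ℝ) (hφc : Continuous φ)
    (hφr : ∀ t, φ t ∈ Set.Icc (0 : ℝ) 1)
    (hφsupp : ∀ t, t ∉ Set.Icc (-(1 / 2) : ℝ) (1 / 2) → φ t = 0)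
    (hφ1 : ∀ t ∈ Set.Icc (-(1 / 4) : ℝ) (1 / 4), φ t = 1)
    (I : Set UnitAddCircle) (A : UnitAddCircle → ℝ)
    (hA : Set.BijOn A I (Set.Icc (-(1 / 2) : ℝ) (1 / 2)))
    (hdisj : ∀ k ∈ Finset.Icc 0 (2 * n), ∀ k' ∈ Finset.Icc 0 (2 * n), k ≠ k' →
      Disjoint ((fun z => z + k • (α : UnitAddCircle)) '' I)
               ((fun z => z + k' • (α : UnitAddCircle)) '' I))
    (φω : UnitAddCircle → ℝ)
    (hval : ∀ x ∈ I, ∀ k ∈ Finset.Icc 1 (2 * n - 1),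
      φω (x + k • (α : UnitAddCircle)) = ((n : ℝ) - |(n : ℝ) - (k : ℝ)|) * φ (A x))
    (hzero : ∀ z : UnitAddCircle,
      z ∉ ⋃ k ∈ Finset.Icc 1 (2 * n - 1), (fun x => x + k • (α : UnitAddCircle)) '' I →
      φω z = 0) :
    (∀ z : UnitAddCircle, |φω (z + (α : UnitAddCircle)) - φω z| ≤ 1) ∧
    (∀ x ∈ I, φω (x + n • (α : UnitAddCircle)) = (n : ℝ) * φ (A x)) ∧
    (∀ z, φω z ≤ (n : ℝ)) ∧ (∃ z, φω z = (n : ℝ)) :=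
  stmt13_general α n hn φ hφr hφ1 I A hA hdisj φω hval hzero
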